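/- Fix an integer k ≥ 2 and let a^j_ℓ be the coefficient of T^{j−ℓ} in Q^{j+1}, where Q = T/(e^T − 1). For every integer j ≥ 1 there exist real numbers γ_1, …, γ_j such that for every ℓ ∈ {0, 1, …, j−1}: Σ_{j'=ℓ+1}^{j} a^j_{j'} · (−1/k)^{j'−ℓ} / (j'−ℓ)! = Σ_{s=ℓ}^{j−1} γ_{j−s} · a^s_ℓ. -/

import Mathlib

/-- `a j ℓ` is the coefficient of `T^(j-ℓ)` in `Q^(j+1)`, where
`Q = T/(eᵀ - 1)` is the Bernoulli generating power series (with `B₁ = -1/2`). -/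
noncomputable def bernCoef (j ℓ : ℕ) : ℚ :=
  PowerSeries.coeff (j - ℓ) ((bernoulliPowerSeries ℚ) ^ (j + 1))

/-!
Since `Q` has constant term `1`, the diagonal coefficients `a^s_s` all equal `1`. The equations
for `ℓ = j-1, j-2, …, 0` are therefore a unitriangular linear system in `γ_1, …, γ_j`: the
equation for `ℓ` brings in `γ_{j-ℓ}` with coefficient `1` and otherwise only `γ_1, …, γ_{j-ℓ-1}`.
Back-substitution solves it for any left-hand sides.
-/

open Finset

lemma bernCoef_self (ℓ : ℕ) : bernCoef ℓ ℓ = 1 := by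
  simp [bernCoef, PowerSeries.coeff_zero_eq_constantCoeff, bernoulliPowerSeries]

lemma exists_forall_sum_Ico_mul_eq_of_diag_eq_one {R : Type*} [Ring R] (a : ℕ → ℕ → R)
    (ha : ∀ s, a s s = 1) (n : ℕ) (L : ℕ → R) :
    ∃ c : ℕ → R, ∀ ℓ < n, ∑ s ∈ Ico ℓ n, c s * a s ℓ = L ℓ := by
  induction n generalizing L with
  | zero => exact ⟨0, fun ℓ hℓ => absurd hℓ (Nat.not_lt_zero ℓ)⟩
  | succ n ih =>
    -- solve for the lower unknowns after moving the term of the top unknown `c n = L n` across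
    obtain ⟨c, hc⟩ := ih fun ℓ => L ℓ - L n * a n ℓ
    refine ⟨Function.update c n (L n), fun ℓ hℓ => ?_⟩
    rw [sum_Ico_succ_top (by omega), Function.update_self]
    obtain hlt | rfl := Nat.lt_succ_iff_lt_or_eq.mp hℓ
    · have hlow : ∑ s ∈ Ico ℓ n, Function.update c n (L n) s * a s ℓ = L ℓ - L n * a n ℓ := by
        rw [← hc ℓ hlt]
        refine sum_congr rfl fun s hs => ?_
        rw [Function.update_of_ne (mem_Ico.mp hs).2.ne]
      rw [hlow, sub_add_cancel]
    · simp [ha]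

theorem exists_gamma_general (k : ℕ) (j : ℕ) :
    ∃ γ : ℕ → ℝ, ∀ ℓ : ℕ, ℓ < j →
      ∑ j' ∈ Finset.Icc (ℓ + 1) j,
          (bernCoef j j' : ℝ) * (-1 / (k : ℝ)) ^ (j' - ℓ) / (Nat.factorial (j' - ℓ) : ℝ)
        = ∑ s ∈ Finset.Icc ℓ (j - 1), γ (j - s) * (bernCoef s ℓ : ℝ) := by
  obtain ⟨c, hc⟩ := exists_forall_sum_Ico_mul_eq_of_diag_eq_one (fun s ℓ => (bernCoef s ℓ : ℝ))
    (fun s => by simp [bernCoef_self]) j fun ℓ => ∑ j' ∈ Icc (ℓ + 1) j,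
      (bernCoef j j' : ℝ) * (-1 / (k : ℝ)) ^ (j' - ℓ) / (Nat.factorial (j' - ℓ) : ℝ)
  refine ⟨fun m => c (j - m), fun ℓ hℓ => ?_⟩
  rw [← hc ℓ hℓ, Icc_sub_one_right_eq_Ico_of_not_isMin (by simpa using hℓ.ne_bot)]
  refine sum_congr rfl fun s hs => ?_
  dsimp only
  rw [Nat.sub_sub_self (mem_Ico.mp hs).2.le]

/-- For every `j ≥ 1` there exist reals `γ_1, …, γ_j` such that for every `0 ≤ ℓ ≤ j-1`:
`Σ_{j'=ℓ+1}^{j} a^j_{j'} (-1/k)^{j'-ℓ} / (j'-ℓ)! = Σ_{s=ℓ}^{j-1} γ_{j-s} a^s_ℓ`. -/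
theorem exists_gamma (k : ℕ) (hk : 2 ≤ k) (j : ℕ) (hj : 1 ≤ j) :
    ∃ γ : ℕ → ℝ, ∀ ℓ : ℕ, ℓ < j →
      ∑ j' ∈ Finset.Icc (ℓ + 1) j,
          (bernCoef j j' : ℝ) * (-1 / (k : ℝ)) ^ (j' - ℓ) / (Nat.factorial (j' - ℓ) : ℝ)
        = ∑ s ∈ Finset.Icc ℓ (j - 1), γ (j - s) * (bernCoef s ℓ : ℝ) :=
  exists_gamma_general k j
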